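/- Let η_l < η_r and let F : ℝ → ℝ be of class C³ and bistable between η_l and η_r. Let (η, c) be a Weertman profile with velocity c for the potential F. Then the limit lim_{R→+∞} ∫_{−R}^{R} F'(η(x)) dx exists and c = (1/(η_r − η_l)) · lim_{R→+∞} ∫_{−R}^{R} F'(η(x)) dx. -/

import Mathlib

open MeasureTheory Filter Set

/-- The half-Laplacian `|∂x|` acting on a bounded C² function. -/
noncomputable def halfLap (u : ℝ → ℝ) (x : ℝ) : ℝ :=
  -(1 / Real.pi) * ∫ y in Set.Ioi (0 : ℝ), (u (x + y) - 2 * u x + u (x - y)) / y ^ 2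

/-!
Integrating the profile equation over `[-R, R]` gives
`∫_{-R}^{R} F'(η) = c (η R - η (-R)) - ∫_{-R}^{R} |∂x| η`,
so it suffices that the last integral tends to `0`. By Fubini it equals
`-(1/π) ∫_0^∞ G_R(y) / y² dy` with `G_R(y) = ∫_{-R}^{R} (η(x+y) - 2η(x) + η(x-y)) dx`,
in which the bulk cancels and only increments of `η` near `±R` survive. For `y ≤ R/2`
these are `O(y² / R²)` by the decay `η' ≤ B / x²`; for larger `y` they are controlled by
the imbalance `(η_r - η s) - (η (-s) - η_l) = O(1 / |s|)`, whose integral over `[-T, T]`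
grows only like `log T`. Altogether `∫_{-R}^{R} |∂x| η = O(log R / R)`.
-/

open Real Topology

def secondDiff (f : ℝ → ℝ) (x y : ℝ) : ℝ := f (x + y) - 2 * f x + f (x - y)

def centralDiff (f : ℝ → ℝ) (a t : ℝ) : ℝ := f (a + t) - f (a - t)

theorem integral_secondDiff {f : ℝ → ℝ} (hf : Continuous f) (a b y : ℝ) :
    ∫ x in a..b, secondDiff f x y = ∫ t in 0..y, (centralDiff f b t - centralDiff f a t) := by
  have hi : ∀ g : ℝ → ℝ, Continuous g → ∀ u v, IntervalIntegrable g volume u v :=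
    fun g hg u v => hg.intervalIntegrable u v
  set P : ℝ → ℝ := fun u => ∫ x in 0..u, f x
  have hP : ∀ u v, ∫ x in u..v, f x = P v - P u := fun u v =>
    (intervalIntegral.integral_interval_sub_left (hi f hf 0 v) (hi f hf 0 u)).symm
  simp only [secondDiff, centralDiff]
  rw [intervalIntegral.integral_add (hi _ (by fun_prop) _ _) (hi _ (by fun_prop) _ _),
    intervalIntegral.integral_sub (hi _ (by fun_prop) _ _) (hi _ (by fun_prop) _ _),
    intervalIntegral.integral_sub (hi _ (by fun_prop) _ _) (hi _ (by fun_prop) _ _),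
    intervalIntegral.integral_sub (hi _ (by fun_prop) _ _) (hi _ (by fun_prop) _ _),
    intervalIntegral.integral_sub (hi _ (by fun_prop) _ _) (hi _ (by fun_prop) _ _),
    intervalIntegral.integral_comp_add_right, intervalIntegral.integral_comp_sub_right,
    intervalIntegral.integral_const_mul, intervalIntegral.integral_comp_add_left,
    intervalIntegral.integral_comp_add_left, intervalIntegral.integral_comp_sub_left,
    intervalIntegral.integral_comp_sub_left]
  simp only [hP, add_zero, sub_zero]
  ring

theorem abs_secondDiff_le {f : ℝ → ℝ} (hf : ContDiff ℝ 2 f) {x y C : ℝ} (hy : 0 ≤ y)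
    (hC : ∀ s ∈ Icc (x - y) (x + y), |deriv (deriv f) s| ≤ C) :
    |secondDiff f x y| ≤ 2 * C * y ^ 2 := by
  have hf' : ContDiff ℝ 1 (deriv f) := hf.iterate_deriv' 1 1
  have hderiv : ∀ s, HasDerivAt (fun s => f (x + s) + f (x - s))
      (deriv f (x + s) - deriv f (x - s)) s := by
    intro s
    have hd := hf.differentiable two_ne_zero
    simpa [sub_eq_add_neg] using ((hd (x + s)).hasDerivAt.comp_const_add x s).fun_add
      ((hd (x - s)).hasDerivAt.comp_const_sub x s)
  have hslope : ∀ s ∈ Icc 0 y, ‖deriv f (x + s) - deriv f (x - s)‖ ≤ 2 * C * y := by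
    rintro s ⟨hs₀, hsy⟩
    have hlip := (convex_Icc (x - y) (x + y)).norm_image_sub_le_of_norm_deriv_le
      (fun z _ => (hf'.differentiable one_ne_zero z)) (fun z hz => hC z hz)
      (⟨by linarith, by linarith⟩ : x - s ∈ Icc (x - y) (x + y))
      (⟨by linarith, by linarith⟩ : x + s ∈ Icc (x - y) (x + y))
    rw [Real.norm_eq_abs, Real.norm_eq_abs,
      abs_of_nonneg (by linarith : (0 : ℝ) ≤ x + s - (x - s))] at hlip
    rw [Real.norm_eq_abs]
    have hC0 : 0 ≤ C := (abs_nonneg _).trans (hC x ⟨by linarith, by linarith⟩)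
    nlinarith
  have := (convex_Icc 0 y).norm_image_sub_le_of_norm_deriv_le
    (fun s _ => (hderiv s).differentiableAt) (fun s hs => (hderiv s).deriv ▸ hslope s hs)
    (left_mem_Icc.2 hy) (right_mem_Icc.2 hy)
  simp only [Real.norm_eq_abs, add_zero, sub_zero, abs_of_nonneg hy] at this
  calc |secondDiff f x y| = |f (x + y) + f (x - y) - (f x + f x)| := by
        rw [secondDiff]; ring_nf
    _ ≤ 2 * C * y * y := this
    _ = 2 * C * y ^ 2 := by ring

theorem abs_secondDiff_div_sq_le {f : ℝ → ℝ} (hf : ContDiff ℝ 2 f) {M C x y : ℝ}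
    (hM : ∀ z, |f z| ≤ M) (hC : ∀ s ∈ Icc (x - 1) (x + 1), |deriv (deriv f) s| ≤ C)
    (hy : 0 < y) :
    |secondDiff f x y / y ^ 2| ≤ (4 * C + 8 * M) * (1 + y ^ 2)⁻¹ := by
  have hC0 : 0 ≤ C := (abs_nonneg _).trans (hC x ⟨by linarith, by linarith⟩)
  have hM0 : 0 ≤ M := (abs_nonneg _).trans (hM 0)
  rw [abs_div, abs_of_pos (by positivity : 0 < y ^ 2), ← div_eq_mul_inv,
    div_le_div_iff₀ (by positivity) (by positivity)]
  rcases le_or_gt y 1 with hy1 | hy1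
  · have := abs_secondDiff_le hf hy.le fun s hs => hC s ⟨by linarith [hs.1], by linarith [hs.2]⟩
    have hy2 : y ^ 2 ≤ 1 := by nlinarith
    nlinarith [mul_le_mul_of_nonneg_right this (by positivity : (0 : ℝ) ≤ 1 + y ^ 2),
      mul_le_mul_of_nonneg_left hy2 (by positivity : 0 ≤ C * y ^ 2)]
  · have : |secondDiff f x y| ≤ 4 * M := by
      obtain ⟨h₁, h₁'⟩ := abs_le.1 (hM (x + y))
      obtain ⟨h₂, h₂'⟩ := abs_le.1 (hM x)
      obtain ⟨h₃, h₃'⟩ := abs_le.1 (hM (x - y))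
      rw [secondDiff, abs_le]
      constructor <;> linarith
    have hy2 : 1 ≤ y ^ 2 := by nlinarith
    nlinarith [mul_le_mul_of_nonneg_right this (by positivity : (0 : ℝ) ≤ 1 + y ^ 2),
      mul_le_mul_of_nonneg_left hy2 hM0, mul_nonneg hC0 (sq_nonneg y)]

theorem centralDiff_nonneg {f : ℝ → ℝ} (hf : Monotone f) (a : ℝ) {t : ℝ} (ht : 0 ≤ t) :
    0 ≤ centralDiff f a t :=
  sub_nonneg.2 (hf (by linarith))

theorem centralDiff_le {f : ℝ → ℝ} (hf : Differentiable ℝ f) {a t K : ℝ} (ht : 0 ≤ t)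
    (hK : ∀ s ∈ Icc (a - t) (a + t), deriv f s ≤ K) :
    centralDiff f a t ≤ 2 * K * t := by
  have := (convex_Icc (a - t) (a + t)).image_sub_le_mul_sub_of_deriv_le
    hf.continuous.continuousOn hf.differentiableOn (fun s hs => hK s (interior_subset hs))
    (a - t) ⟨le_rfl, by linarith⟩ (a + t) ⟨by linarith, le_rfl⟩ (by linarith)
  rw [centralDiff]
  linarith

section HalfLaplacian

variable {f : ℝ → ℝ} {M : ℝ}

theorem integrable_secondDiff_div_sq (hf : ContDiff ℝ 2 f) (hM : ∀ z, |f z| ≤ M) (a b : ℝ) :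
    Integrable (Function.uncurry fun x y => secondDiff f x y / y ^ 2)
      ((volume.restrict (Ioc a b)).prod (volume.restrict (Ioi 0))) := by
  have hf'' : Continuous (deriv (deriv f)) := (hf.iterate_deriv' 1 1).continuous_deriv le_rfl
  obtain ⟨C, hC⟩ := isCompact_Icc.exists_bound_of_continuousOn
    (s := Icc (a - 1) (b + 1)) hf''.continuousOn
  have : IsFiniteMeasure (volume.restrict (Ioc a b)) :=
    isFiniteMeasure_restrict.2 measure_Ioc_lt_top.ne
  refine Integrable.mono'
    ((integrable_inv_one_add_sq.const_mul (4 * C + 8 * M)).integrableOn.comp_snd _) ?_ ?_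
  · refine Measurable.aestronglyMeasurable (Measurable.div ?_ (measurable_snd.pow_const 2))
    exact (show Continuous fun p : ℝ × ℝ => secondDiff f p.1 p.2 by
      unfold secondDiff; fun_prop).measurable
  · rw [Measure.prod_restrict]
    filter_upwards [ae_restrict_mem (measurableSet_Ioc.prod measurableSet_Ioi)]
      with ⟨x, y⟩ ⟨⟨hax, hxb⟩, hy⟩
    exact abs_secondDiff_div_sq_le hf hM
      (fun s hs => hC s ⟨by linarith [hs.1], by linarith [hs.2]⟩) hy

theorem integral_halfLap (hf : ContDiff ℝ 2 f) (hM : ∀ z, |f z| ≤ M) {a b : ℝ} (hab : a ≤ b) :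
    ∫ x in a..b, halfLap f x =
      -(1 / π) * ∫ y in Ioi 0, (∫ x in a..b, secondDiff f x y) / y ^ 2 := by
  simp only [halfLap, intervalIntegral.integral_of_le hab, integral_const_mul, ← integral_div]
  congr 1
  exact integral_integral_swap (integrable_secondDiff_div_sq hf hM a b)

theorem integrableOn_integral_secondDiff_div_sq (hf : ContDiff ℝ 2 f) (hM : ∀ z, |f z| ≤ M)
    {a b : ℝ} (hab : a ≤ b) :
    IntegrableOn (fun y => (∫ x in a..b, secondDiff f x y) / y ^ 2) (Ioi 0) := by
  rw [IntegrableOn]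
  simpa only [intervalIntegral.integral_of_le hab, ← integral_div, Function.uncurry_apply_pair]
    using (integrable_secondDiff_div_sq hf hM a b).integral_prod_right

theorem intervalIntegrable_halfLap (hf : ContDiff ℝ 2 f) (hM : ∀ z, |f z| ≤ M) (a b : ℝ) :
    IntervalIntegrable (halfLap f) volume a b := by
  have h : ∀ a b, IntegrableOn (halfLap f) (Ioc a b) := fun a b =>
    ((integrable_secondDiff_div_sq hf hM a b).integral_prod_left.const_mul (-(1 / π)))
  exact ⟨h a b, h b a⟩

end HalfLaplacian

section LogIntegral

variable {K L a : ℝ}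

theorem hasDerivAt_neg_add_mul_log_add_one_div (K L : ℝ) {y : ℝ} (hy : y ≠ 0) :
    HasDerivAt (fun t => -((K + L * (log t + 1)) / t)) ((K + L * log y) / y ^ 2) y := by
  refine ((((hasDerivAt_log hy).add_const 1).const_mul L).const_add K
    |>.fun_div (hasDerivAt_id' y) hy).fun_neg.congr_deriv ?_
  field_simp
  ring

theorem tendsto_add_mul_log_add_one_div_atTop (K L : ℝ) :
    Tendsto (fun t => (K + L * (log t + 1)) / t) atTop (𝓝 0) := by
  have h := ((tendsto_pow_log_div_mul_add_atTop 1 0 1 one_ne_zero).const_mul L).add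
    (tendsto_const_nhds.div_atTop tendsto_id : Tendsto (fun t : ℝ => (K + L) / t) atTop (𝓝 0))
  simp only [pow_one, one_mul, add_zero, mul_zero] at h
  refine h.congr fun t => ?_
  ring

theorem integrableOn_Ioi_add_mul_log_div_sq (hK : 0 ≤ K) (hL : 0 ≤ L) (ha : 1 ≤ a) :
    IntegrableOn (fun y => (K + L * log y) / y ^ 2) (Ioi a) :=
  integrableOn_Ioi_deriv_of_nonneg
    (hasDerivAt_neg_add_mul_log_add_one_div K L (by positivity)).continuousAt.continuousWithinAt
    (fun y hy => hasDerivAt_neg_add_mul_log_add_one_div K L (by linarith [mem_Ioi.1 hy]))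
    (fun y hy => by have := log_nonneg (ha.trans (mem_Ioi.1 hy).le); positivity)
    (by simpa using (tendsto_add_mul_log_add_one_div_atTop K L).neg)

theorem integral_Ioi_add_mul_log_div_sq (hK : 0 ≤ K) (hL : 0 ≤ L) (ha : 1 ≤ a) :
    ∫ y in Ioi a, (K + L * log y) / y ^ 2 = (K + L * (log a + 1)) / a := by
  rw [integral_Ioi_of_hasDerivAt_of_nonneg
    (hasDerivAt_neg_add_mul_log_add_one_div K L (by positivity)).continuousAt.continuousWithinAt
    (fun y hy => hasDerivAt_neg_add_mul_log_add_one_div K L (by linarith [mem_Ioi.1 hy]))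
    (fun y hy => by have := log_nonneg (ha.trans (mem_Ioi.1 hy).le); positivity)
    (by simpa using (tendsto_add_mul_log_add_one_div_atTop K L).neg)]
  ring

end LogIntegral

theorem sub_le_div_of_deriv_le_div_sq {f : ℝ → ℝ} {l B x : ℝ} (hf : Differentiable ℝ f)
    (hlim : Tendsto f atTop (𝓝 l)) (hx : 0 < x) (hB : ∀ t, x ≤ t → deriv f t ≤ B / t ^ 2) :
    l - f x ≤ B / x := by
  have hderiv : ∀ t, 0 < t → HasDerivAt (fun t => f t + B / t) (deriv f t - B / t ^ 2) t := by
    intro t ht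
    refine ((hf t).hasDerivAt.fun_add
      ((hasDerivAt_const t B).fun_div (hasDerivAt_id' t) ht.ne')).congr_deriv ?_
    ring
  have hanti : AntitoneOn (fun t => f t + B / t) (Ici x) := by
    refine antitoneOn_of_deriv_nonpos (convex_Ici x)
      (fun t ht => (hderiv t (hx.trans_le ht)).continuousAt.continuousWithinAt) ?_ ?_ <;>
      rw [interior_Ici]
    · exact fun t ht => (hderiv t (hx.trans ht)).differentiableAt.differentiableWithinAt
    · intro t ht
      rw [(hderiv t (hx.trans ht)).deriv]
      linarith [hB t (le_of_lt ht)]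
  have hlim' : Tendsto (fun t => f t + B / t) atTop (𝓝 l) := by
    simpa using hlim.add (tendsto_const_nhds.div_atTop tendsto_id)
  have : l ≤ f x + B / x := le_of_tendsto hlim'
    ((eventually_ge_atTop x).mono fun t ht => hanti self_mem_Ici ht ht)
  linarith

section Profile

variable {η : ℝ → ℝ} {ηl ηr B : ℝ}

theorem abs_le_max_abs_of_tendsto (hmono : Monotone η) (hbot : Tendsto η atBot (𝓝 ηl))
    (htop : Tendsto η atTop (𝓝 ηr)) (z : ℝ) : |η z| ≤ max |ηl| |ηr| :=
  abs_le_max_abs_abs (hmono.le_of_tendsto hbot z) (hmono.ge_of_tendsto htop z)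

def tailImbalance (η : ℝ → ℝ) (ηl ηr s : ℝ) : ℝ := (ηr - η s) - (η (-s) - ηl)

theorem tailImbalance_neg (s : ℝ) : tailImbalance η ηl ηr (-s) = tailImbalance η ηl ηr s := by
  simp only [tailImbalance, neg_neg]
  ring

theorem continuous_tailImbalance (hη : Continuous η) : Continuous (tailImbalance η ηl ηr) := by
  unfold tailImbalance
  fun_prop

theorem abs_tailImbalance_le (hmono : Monotone η) (hbot : Tendsto η atBot (𝓝 ηl))
    (htop : Tendsto η atTop (𝓝 ηr)) (s : ℝ) : |tailImbalance η ηl ηr s| ≤ ηr - ηl := by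
  have := hmono.ge_of_tendsto htop s
  have := hmono.ge_of_tendsto htop (-s)
  have := hmono.le_of_tendsto hbot s
  have := hmono.le_of_tendsto hbot (-s)
  rw [abs_le, tailImbalance]
  constructor <;> linarith

theorem abs_tailImbalance_le_div (hη : Differentiable ℝ η) (hmono : Monotone η)
    (hbot : Tendsto η atBot (𝓝 ηl)) (htop : Tendsto η atTop (𝓝 ηr))
    (hB : ∀ s, 1 ≤ |s| → deriv η s ≤ B / |s| ^ 2) {s : ℝ} (hs : 1 ≤ |s|) :
    |tailImbalance η ηl ηr s| ≤ B / |s| := by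
  wlog hs₀ : 0 ≤ s generalizing s
  · simpa only [tailImbalance_neg, abs_neg] using
      this (s := -s) (by rwa [abs_neg]) (by linarith)
  rw [abs_of_nonneg hs₀] at hs ⊢
  have hright : ηr - η s ≤ B / s :=
    sub_le_div_of_deriv_le_div_sq hη htop (by linarith) fun t ht => by
      simpa only [abs_of_pos (by linarith : (0 : ℝ) < t)] using
        hB t (by rw [abs_of_pos (by linarith)]; linarith)
  have hleft : -ηl - -η (-s) ≤ B / s :=
    sub_le_div_of_deriv_le_div_sq (f := fun t => -η (-t)) (hη.comp differentiable_neg).neg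
      (hbot.comp tendsto_neg_atTop_atBot).neg (by linarith)
      fun t ht => by
        rw [deriv.fun_neg, deriv_comp_neg, neg_neg]
        simpa only [abs_neg, abs_of_pos (by linarith : (0 : ℝ) < t)] using
          hB (-t) (by rw [abs_neg, abs_of_pos (by linarith)]; linarith)
  have := hmono.ge_of_tendsto htop s
  have := hmono.le_of_tendsto hbot (-s)
  rw [abs_le, tailImbalance]
  constructor <;> linarith

theorem integral_abs_tailImbalance_le (hη : Differentiable ℝ η) (hmono : Monotone η)
    (hbot : Tendsto η atBot (𝓝 ηl)) (htop : Tendsto η atTop (𝓝 ηr))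
    (hB : ∀ s, 1 ≤ |s| → deriv η s ≤ B / |s| ^ 2) {T : ℝ} (hT : 1 ≤ T) :
    ∫ s in -T..T, |tailImbalance η ηl ηr s| ≤ 2 * (ηr - ηl) + 2 * B * log T := by
  have hi : ∀ u v, IntervalIntegrable (fun s => |tailImbalance η ηl ηr s|) volume u v :=
    fun u v => (continuous_tailImbalance hη.continuous).abs.intervalIntegrable u v
  have heven :
      ∫ s in -T..0, |tailImbalance η ηl ηr s| = ∫ s in 0..T, |tailImbalance η ηl ηr s| := by
    simpa only [tailImbalance_neg, neg_zero] using
      (intervalIntegral.integral_comp_neg (a := 0) (b := T)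
        (fun s => |tailImbalance η ηl ηr s|)).symm
  have hnear : ∫ s in 0..1, |tailImbalance η ηl ηr s| ≤ ηr - ηl := by
    simpa using intervalIntegral.integral_mono_on zero_le_one (hi 0 1) intervalIntegrable_const
      fun s _ => abs_tailImbalance_le hmono hbot htop s
  have hfar : ∫ s in 1..T, |tailImbalance η ηl ηr s| ≤ B * log T := by
    calc ∫ s in 1..T, |tailImbalance η ηl ηr s| ≤ ∫ s in 1..T, B * s⁻¹ := by
          refine intervalIntegral.integral_mono_on hT (hi 1 T)
            ((intervalIntegral.intervalIntegrable_inv (fun s hs => ?_) continuousOn_id).const_mul B)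
            fun s hs => ?_
          · rw [uIcc_of_le hT] at hs
            exact (zero_lt_one.trans_le hs.1).ne'
          · have h₁ : 0 < s := zero_lt_one.trans_le hs.1
            simpa only [abs_of_pos h₁, div_eq_mul_inv] using abs_tailImbalance_le_div
              hη hmono hbot htop hB (s := s) (by rw [abs_of_pos h₁]; exact hs.1)
      _ = B * log T := by
          rw [intervalIntegral.integral_const_mul, integral_inv_of_pos one_pos (by linarith),
            div_one]
  rw [← intervalIntegral.integral_add_adjacent_intervals (hi (-T) 0) (hi 0 T), heven,
    ← intervalIntegral.integral_add_adjacent_intervals (hi 0 1) (hi 1 T)]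
  linarith

end Profile

section Estimates

variable {η : ℝ → ℝ} {ηl ηr B : ℝ}

theorem deriv_le_of_half_le_abs (hB : ∀ s, 1 ≤ |s| → deriv η s ≤ B / |s| ^ 2) (hB₀ : 0 ≤ B)
    {R s : ℝ} (hR : 2 ≤ R) (hs : R / 2 ≤ |s|) : deriv η s ≤ 4 * B / R ^ 2 :=
  calc deriv η s ≤ B / |s| ^ 2 := hB s (by linarith)
    _ ≤ B / (R / 2) ^ 2 := by gcongr
    _ = 4 * B / R ^ 2 := by ring

theorem abs_integral_secondDiff_le_sq (hη : Differentiable ℝ η) (hmono : Monotone η)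
    (hB : ∀ s, 1 ≤ |s| → deriv η s ≤ B / |s| ^ 2) (hB₀ : 0 ≤ B) {R y : ℝ} (hR : 2 ≤ R)
    (hy : 0 ≤ y) (hyR : y ≤ R / 2) :
    |∫ x in -R..R, secondDiff η x y| ≤ 4 * B / R ^ 2 * y ^ 2 := by
  have hcd : ∀ a, |a| = R → ∀ t ∈ Ioc 0 y, centralDiff η a t ≤ 8 * B / R ^ 2 * t := by
    intro a ha t ht
    refine (centralDiff_le hη (a := a) ht.1.le fun s hs =>
      deriv_le_of_half_le_abs hB hB₀ hR (s := s) ?_).trans_eq (by ring)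
    have : |a - s| ≤ t := abs_le.2 ⟨by linarith [hs.2], by linarith [hs.1]⟩
    linarith [abs_sub_abs_le_abs_sub a s, ht.2]
  rw [integral_secondDiff hη.continuous]
  calc ‖∫ t in 0..y, (centralDiff η R t - centralDiff η (-R) t)‖
      ≤ ∫ t in 0..y, 8 * B / R ^ 2 * t :=
        intervalIntegral.norm_integral_le_of_norm_le hy (ae_of_all _ fun t ht =>
          abs_sub_le_of_nonneg_of_le (centralDiff_nonneg hmono R ht.1.le)
            (hcd R (abs_of_nonneg (by linarith)) t ht)
            (centralDiff_nonneg hmono (-R) ht.1.le)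
            (hcd (-R) (by rw [abs_neg, abs_of_nonneg (by linarith)]) t ht))
          ((continuous_const.mul continuous_id).intervalIntegrable _ _)
    _ = 4 * B / R ^ 2 * y ^ 2 := by
        rw [intervalIntegral.integral_const_mul, integral_id]
        ring

theorem abs_integral_secondDiff_le_log (hη : Differentiable ℝ η) (hmono : Monotone η)
    (hbot : Tendsto η atBot (𝓝 ηl)) (htop : Tendsto η atTop (𝓝 ηr))
    (hB : ∀ s, 1 ≤ |s| → deriv η s ≤ B / |s| ^ 2) {R y : ℝ} (hR : 0 ≤ R) (hy : 0 ≤ y)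
    (hRy : 1 ≤ R + y) :
    |∫ x in -R..R, secondDiff η x y| ≤ 2 * (ηr - ηl) + 2 * B * log (R + y) := by
  have hq := continuous_tailImbalance (ηl := ηl) (ηr := ηr) hη.continuous
  have hi : ∀ u v, IntervalIntegrable (fun s => |tailImbalance η ηl ηr s|) volume u v :=
    fun u v => hq.abs.intervalIntegrable u v
  have hc₁ : Continuous fun t => |tailImbalance η ηl ηr (R - t)| := by fun_prop
  have hc₂ : Continuous fun t => |tailImbalance η ηl ηr (R + t)| := by fun_prop
  have hcd : ∀ t, centralDiff η R t - centralDiff η (-R) t =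
      tailImbalance η ηl ηr (R - t) - tailImbalance η ηl ηr (R + t) := by
    intro t
    simp only [centralDiff, tailImbalance, neg_sub, neg_add']
    ring_nf
  rw [integral_secondDiff hη.continuous]
  calc ‖∫ t in 0..y, (centralDiff η R t - centralDiff η (-R) t)‖
      ≤ ∫ t in 0..y, (|tailImbalance η ηl ηr (R - t)| + |tailImbalance η ηl ηr (R + t)|) :=
        intervalIntegral.norm_integral_le_of_norm_le hy
          (ae_of_all _ fun t _ => by rw [hcd, Real.norm_eq_abs]; exact abs_sub _ _)
          ((hc₁.add hc₂).intervalIntegrable _ _)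
    _ = ∫ s in (R - y)..(R + y), |tailImbalance η ηl ηr s| := by
        rw [intervalIntegral.integral_add (hc₁.intervalIntegrable _ _) (hc₂.intervalIntegrable _ _),
          intervalIntegral.integral_comp_sub_left (fun s => |tailImbalance η ηl ηr s|),
          intervalIntegral.integral_comp_add_left (fun s => |tailImbalance η ηl ηr s|),
          sub_zero, add_zero, intervalIntegral.integral_add_adjacent_intervals (hi _ _) (hi _ _)]
    _ ≤ ∫ s in -(R + y)..(R + y), |tailImbalance η ηl ηr s| :=
        intervalIntegral.integral_mono_interval (by linarith) (by linarith) le_rfl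
          (ae_of_all _ fun s => abs_nonneg _) (hi _ _)
    _ ≤ 2 * (ηr - ηl) + 2 * B * log (R + y) :=
        integral_abs_tailImbalance_le hη hmono hbot htop hB hRy

theorem abs_integral_integral_secondDiff_div_sq_le (hη : ContDiff ℝ 2 η) (hmono : Monotone η)
    (hbot : Tendsto η atBot (𝓝 ηl)) (htop : Tendsto η atTop (𝓝 ηr))
    (hB : ∀ s, 1 ≤ |s| → deriv η s ≤ B / |s| ^ 2) (hB₀ : 0 ≤ B) {R : ℝ} (hR : 2 ≤ R) :
    |∫ y in Ioi 0, (∫ x in -R..R, secondDiff η x y) / y ^ 2| ≤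
      2 * B / R + (2 * (ηr - ηl) + 2 * B * log 3 + 2 * B * (log (R / 2) + 1)) / (R / 2) := by
  have hη₁ : Differentiable ℝ η := hη.differentiable two_ne_zero
  have hG := integrableOn_integral_secondDiff_div_sq hη
    (abs_le_max_abs_of_tendsto hmono hbot htop) (by linarith : -R ≤ R)
  have hK : 0 ≤ 2 * (ηr - ηl) + 2 * B * log 3 := by
    have := (hmono.le_of_tendsto hbot 0).trans (hmono.ge_of_tendsto htop 0)
    have := log_nonneg (by norm_num : (1 : ℝ) ≤ 3)
    positivity
  have hnear : ‖∫ y in 0..R / 2, (∫ x in -R..R, secondDiff η x y) / y ^ 2‖ ≤ 2 * B / R := by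
    refine (intervalIntegral.norm_integral_le_of_norm_le_const (C := 4 * B / R ^ 2)
      fun y hy => ?_).trans_eq ?_
    · rw [uIoc_of_le (by linarith)] at hy
      rw [Real.norm_eq_abs, abs_div, abs_of_pos (pow_pos hy.1 2), div_le_iff₀ (pow_pos hy.1 2)]
      exact abs_integral_secondDiff_le_sq hη₁ hmono hB hB₀ hR hy.1.le hy.2
    · rw [sub_zero, abs_of_pos (by linarith)]
      field_simp
      ring
  have hfar : ‖∫ y in Ioi (R / 2), (∫ x in -R..R, secondDiff η x y) / y ^ 2‖ ≤
      (2 * (ηr - ηl) + 2 * B * log 3 + 2 * B * (log (R / 2) + 1)) / (R / 2) := by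
    rw [← integral_Ioi_add_mul_log_div_sq hK (by positivity) (by linarith : 1 ≤ R / 2)]
    refine norm_integral_le_of_norm_le
      (integrableOn_Ioi_add_mul_log_div_sq hK (by positivity) (by linarith : 1 ≤ R / 2))
      (ae_restrict_of_forall_mem measurableSet_Ioi fun y hy => ?_)
    have hy : R / 2 < y := hy
    rw [Real.norm_eq_abs, abs_div, abs_of_pos (pow_pos (by linarith : (0 : ℝ) < y) 2)]
    refine div_le_div_of_nonneg_right ?_ (sq_nonneg y)
    calc |∫ x in -R..R, secondDiff η x y|
        ≤ 2 * (ηr - ηl) + 2 * B * log (R + y) :=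
          abs_integral_secondDiff_le_log hη₁ hmono hbot htop hB (by linarith) (by linarith)
            (by linarith)
      _ ≤ 2 * (ηr - ηl) + 2 * B * log (3 * y) := by gcongr <;> linarith
      _ = 2 * (ηr - ηl) + 2 * B * log 3 + 2 * B * log y := by
          rw [log_mul (by norm_num) (by linarith)]
          ring
  rw [← intervalIntegral.integral_interval_add_Ioi hG
    (hG.mono_set (Ioi_subset_Ioi (by linarith : (0 : ℝ) ≤ R / 2)))]
  exact (abs_add_le _ _).trans (add_le_add hnear hfar)

theorem tendsto_integral_halfLap (hη : ContDiff ℝ 2 η) (hmono : Monotone η)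
    (hbot : Tendsto η atBot (𝓝 ηl)) (htop : Tendsto η atTop (𝓝 ηr))
    (hB : ∀ s, 1 ≤ |s| → deriv η s ≤ B / |s| ^ 2) (hB₀ : 0 ≤ B) :
    Tendsto (fun R => ∫ x in -R..R, halfLap η x) atTop (𝓝 0) := by
  have hbound : Tendsto (fun R => 2 * B / R +
      (2 * (ηr - ηl) + 2 * B * log 3 + 2 * B * (log (R / 2) + 1)) / (R / 2)) atTop (𝓝 0) := by
    simpa using (tendsto_const_nhds.div_atTop tendsto_id).add
      ((tendsto_add_mul_log_add_one_div_atTop _ _).comp (tendsto_id.atTop_div_const two_pos))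
  have hlim := (squeeze_zero_norm' ((eventually_ge_atTop 2).mono fun R hR =>
    abs_integral_integral_secondDiff_div_sq_le hη hmono hbot htop hB hB₀ hR) hbound).const_mul
    (-(1 / π))
  rw [mul_zero] at hlim
  exact hlim.congr' ((eventually_ge_atTop 0).mono fun R hR => (integral_halfLap hη
    (abs_le_max_abs_of_tendsto hmono hbot htop) (by linarith)).symm)

end Estimates

theorem weertman_velocity_identity_general
    (ηl ηr : ℝ) (hlr : ηl < ηr)
    (F : ℝ → ℝ)
    (η : ℝ → ℝ) (c : ℝ)
    (hη : ContDiff ℝ 2 η)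
    (hη' : ∀ x, 0 < deriv η x)
    (hbot : Tendsto η atBot (nhds ηl)) (htop : Tendsto η atTop (nhds ηr))
    (heq : ∀ x, -halfLap η x + c * deriv η x = deriv F (η x))
    (hdecay : ∃ A B : ℝ, 0 < A ∧ A < B ∧ ∀ x : ℝ, 1 ≤ |x| →
      A / |x| ^ 2 ≤ deriv η x ∧ deriv η x ≤ B / |x| ^ 2) :
    ∃ I : ℝ, Tendsto (fun R => ∫ x in (-R)..R, deriv F (η x)) atTop (nhds I) ∧
      c = (1 / (ηr - ηl)) * I := by
  obtain ⟨A, B, hA, hAB, hdecay⟩ := hdecay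
  have hmono : Monotone η := (strictMono_of_deriv_pos hη').monotone
  have hη'c : Continuous (deriv η) := hη.continuous_deriv one_le_two
  have hsplit : ∀ R, ∫ x in -R..R, deriv F (η x) =
      c * (η R - η (-R)) - ∫ x in -R..R, halfLap η x := fun R => by
    rw [← intervalIntegral.integral_deriv_eq_sub
        (fun x _ => (hη.differentiable two_ne_zero).differentiableAt) (hη'c.intervalIntegrable _ _),
      ← intervalIntegral.integral_const_mul, ← intervalIntegral.integral_sub
        ((hη'c.intervalIntegrable _ _).const_mul c)
        (intervalIntegrable_halfLap hη (abs_le_max_abs_of_tendsto hmono hbot htop) _ _)]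
    exact intervalIntegral.integral_congr fun x _ => by linarith [heq x]
  refine ⟨c * (ηr - ηl), ?_, by field_simp [sub_ne_zero.2 hlr.ne']⟩
  have := ((htop.sub (hbot.comp tendsto_neg_atTop_atBot)).const_mul c).sub
    (tendsto_integral_halfLap hη hmono hbot htop (fun s hs => (hdecay s hs).2) (hA.trans hAB).le)
  simpa only [hsplit, sub_zero, Function.comp_apply] using this

/-- Identity for the velocity of the Weertman profile (Proposition 2):
`c = (1/(η_r − η_l)) · lim_{R→∞} ∫_{−R}^{R} F'(η)`. -/
theorem weertman_velocity_identity
    (ηl ηr : ℝ) (hlr : ηl < ηr)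
    (F : ℝ → ℝ) (hF : ContDiff ℝ 3 F)
    (hFl : deriv F ηl = 0) (hFr : deriv F ηr = 0)
    (hFl2 : 0 < deriv (deriv F) ηl) (hFr2 : 0 < deriv (deriv F) ηr)
    (η : ℝ → ℝ) (c : ℝ)
    (hη : ContDiff ℝ 2 η)
    (hη' : ∀ x, 0 < deriv η x)
    (hbot : Tendsto η atBot (nhds ηl)) (htop : Tendsto η atTop (nhds ηr))
    (heq : ∀ x, -halfLap η x + c * deriv η x = deriv F (η x))
    (hdecay : ∃ A B : ℝ, 0 < A ∧ A < B ∧ ∀ x : ℝ, 1 ≤ |x| →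
      A / |x| ^ 2 ≤ deriv η x ∧ deriv η x ≤ B / |x| ^ 2) :
    ∃ I : ℝ, Tendsto (fun R => ∫ x in (-R)..R, deriv F (η x)) atTop (nhds I) ∧
      c = (1 / (ηr - ηl)) * I :=
  weertman_velocity_identity_general ηl ηr hlr F η c hη hη' hbot htop heq hdecay
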